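/- arXiv:2502.03073 — 2 statements merged into one kernel-verified Lean document; each statement's English description precedes it below -/
import Mathlib

section
/- Let N ≥ 1 and let 0 < k < N. Then the sum, over all paths w : Fin N → Bool with w(0) = false and exactly k visits to S1, of the weight of w equals ∑_{j=1}^{min(k, N−k)} C(k−1, j−1)·p11^{k−j}·p10^{j−1}·C(N−k−1, j−1)·p01^{j}·p00^{N−k−j} + ∑_{j=1}^{min(k, N−k−1)} C(k−1, j−1)·p11^{k−j}·p10^{j}·C(N−k−1, j)·p01^{j}·p00^{N−k−j−1}. (This is the quantity P₂(k, N | S₀) of Theorem 1.) -/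
open Finset

/-- Transition probability of the two-state chain: `false` is S0, `true` is S1. -/
def mcStep (p00 p01 p10 p11 : ℝ) : Bool → Bool → ℝ
  | false, false => p00
  | false, true  => p01
  | true,  false => p10
  | true,  true  => p11

/-- Weight of a path `w : Fin N → Bool`: product over `i = 0, …, N-2` of the
transition probability from `w i` to `w (i+1)`; equals `1` when `N = 1`. -/
def pathWeight (p00 p01 p10 p11 : ℝ) {N : ℕ} (w : Fin N → Bool) : ℝ :=
  ∏ i : Fin (N - 1),
    mcStep p00 p01 p10 p11
      (w ⟨i.val, by have := i.isLt; omega⟩)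
      (w ⟨i.val + 1, by have := i.isLt; omega⟩)

/-- Number of visits to S1 (i.e. `true`) of a path. -/
def visitsS1 {N : ℕ} (w : Fin N → Bool) : ℕ :=
  (Finset.univ.filter fun i : Fin N => w i = true).card

/-- Number of descents (indices `i ≤ N-2` with `w i = true` and `w (i+1) = false`). -/
def descents {N : ℕ} (w : Fin N → Bool) : ℕ :=
  (Finset.univ.filter fun i : Fin (N - 1) =>
    w ⟨i.val, by have := i.isLt; omega⟩ = true ∧
    w ⟨i.val + 1, by have := i.isLt; omega⟩ = false).card

/-- Number of ascents (indices `i ≤ N-2` with `w i = false` and `w (i+1) = true`). -/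
def ascents {N : ℕ} (w : Fin N → Bool) : ℕ :=
  (Finset.univ.filter fun i : Fin (N - 1) =>
    w ⟨i.val, by have := i.isLt; omega⟩ = false ∧
    w ⟨i.val + 1, by have := i.isLt; omega⟩ = true).card

lemma pathWeight_eq (p00 p01 p10 p11 : ℝ) (n : ℕ) (w : Fin (n+1) → Bool) :
    pathWeight p00 p01 p10 p11 w
      = ∏ i : Fin n, mcStep p00 p01 p10 p11 (w i.castSucc) (w i.succ) := rfl

lemma pathWeight_snoc (p00 p01 p10 p11 : ℝ) (n : ℕ) (v : Fin (n+1) → Bool) (c : Bool) :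
    pathWeight p00 p01 p10 p11 (Fin.snoc v c)
      = pathWeight p00 p01 p10 p11 v * mcStep p00 p01 p10 p11 (v (Fin.last n)) c := by
  rw [pathWeight_eq, pathWeight_eq, Fin.prod_univ_castSucc]
  congr 1
  · exact Finset.prod_congr rfl fun i _ => by
      rw [Fin.succ_castSucc, Fin.snoc_castSucc, Fin.snoc_castSucc]
  · rw [Fin.snoc_castSucc, Fin.succ_last, Fin.snoc_last]

lemma visitsS1_snoc (n : ℕ) (v : Fin (n+1) → Bool) (c : Bool) :
    visitsS1 (Fin.snoc v c) = visitsS1 v + c.toNat := by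
  unfold visitsS1
  rw [Finset.card_filter, Finset.card_filter, Fin.sum_univ_castSucc]
  simp only [Fin.snoc_castSucc, Fin.snoc_last]
  cases c <;> simp

noncomputable def mcF (p00 p01 p10 p11 : ℝ) (n k : ℕ) (b : Bool) : ℝ :=
  ∑ w ∈ Finset.univ.filter (fun w : Fin (n+1) → Bool =>
      w 0 = false ∧ visitsS1 w = k ∧ w (Fin.last n) = b),
    pathWeight p00 p01 p10 p11 w

variable (p00 p01 p10 p11 : ℝ)

lemma snoc_bij (n : ℕ) :
    Function.Bijective (fun x : (Fin (n+1) → Bool) × Bool => Fin.snoc x.1 x.2 : _ → Fin (n+2) → Bool) := by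
  constructor
  · rintro ⟨v, c⟩ ⟨v', c'⟩ h
    simp only at h
    have h1 : v = v' := by
      funext i
      have := congrFun h i.castSucc
      simpa [Fin.snoc_castSucc] using this
    have h2 : c = c' := by
      have := congrFun h (Fin.last (n+1))
      simpa [Fin.snoc_last] using this
    exact Prod.ext h1 h2
  · intro w
    exact ⟨(fun i => w i.castSucc, w (Fin.last (n+1))), by
      simp only
      funext i
      refine Fin.lastCases ?_ ?_ i
      · simp [Fin.snoc_last]
      · intro j; simp [Fin.snoc_castSucc]⟩

lemma mcF_succ (n k : ℕ) (b : Bool) :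
    mcF p00 p01 p10 p11 (n+1) k b =
      (if b.toNat ≤ k then
        mcStep p00 p01 p10 p11 true b * mcF p00 p01 p10 p11 n (k - b.toNat) true
        + mcStep p00 p01 p10 p11 false b * mcF p00 p01 p10 p11 n (k - b.toNat) false
      else 0) := by
  unfold mcF
  rw [Finset.sum_filter, ← Fintype.sum_bijective _ (snoc_bij n) _ _ (fun x => rfl)]
  rw [Fintype.sum_prod_type]
  have h0 : ∀ v : Fin (n+1) → Bool, ∀ c, (Fin.snoc v c : Fin (n+2) → Bool) 0 = v 0 := by
    intro v c
    rw [show (0 : Fin (n+2)) = Fin.castSucc 0 by simp, Fin.snoc_castSucc]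
  simp only [Fin.snoc_last, visitsS1_snoc, pathWeight_snoc, h0]
  rw [Fintype.sum_congr _ _ (fun v => Fintype.sum_bool _)]
  by_cases hbk : b.toNat ≤ k
  · rw [if_pos hbk, Finset.mul_sum, Finset.mul_sum, Finset.sum_filter, Finset.sum_filter,
      ← Finset.sum_add_distrib]
    apply Finset.sum_congr rfl
    intro a _
    cases b <;> cases ha : a (Fin.last n) <;>
      simp only [ha, Bool.toNat_true, Bool.toNat_false, Nat.add_zero, mcStep] at hbk ⊢ <;>
      split_ifs <;> (try ring) <;> (try omega) <;> simp_all <;> omega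
  · rw [if_neg hbk]
    apply Finset.sum_eq_zero
    intro a _
    cases b <;>
      simp only [Bool.toNat_true, Bool.toNat_false, Nat.add_zero] at hbk ⊢ <;>
      split_ifs <;> (try ring) <;> (try omega) <;> simp_all <;> omega

noncomputable def Atr (p00 p01 p10 p11 : ℝ) (n k : ℕ) : ℝ :=
  ∑ i ∈ Finset.range (n+1),
    (Nat.choose (k-1) i : ℝ) * (Nat.choose (n-k) i : ℝ) *
      p11 ^ (k-1-i) * p10 ^ i * p01 ^ (i+1) * p00 ^ (n-k-i)

noncomputable def Bfa (p00 p01 p10 p11 : ℝ) (n k : ℕ) : ℝ :=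
  ∑ i ∈ Finset.range (n+1),
    (Nat.choose (k-1) i : ℝ) * (Nat.choose (n-k) (i+1) : ℝ) *
      p11 ^ (k-1-i) * p10 ^ (i+1) * p01 ^ (i+1) * p00 ^ (n-k-i-1)

variable (p00 p01 p10 p11 : ℝ)

lemma Atr_one (n : ℕ) : Atr p00 p01 p10 p11 (n+1) 1 = p01 * p00 ^ n := by
  unfold Atr
  rw [Finset.sum_range_succ']
  have h1 : ∀ i ∈ Finset.range (n+1),
      (Nat.choose (1-1) (i+1) : ℝ) * (Nat.choose (n+1-1) (i+1) : ℝ) *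
        p11 ^ (1-1-(i+1)) * p10 ^ (i+1) * p01 ^ (i+1+1) * p00 ^ (n+1-1-(i+1)) = 0 := by
    intro i _
    simp [Nat.choose_eq_zero_of_lt (by omega : (0:ℕ) < i+1)]
  rw [Finset.sum_congr rfl h1]
  simp

lemma Bfa_top (n : ℕ) : Bfa p00 p01 p10 p11 (n+1) (n+1) = 0 := by
  unfold Bfa
  apply Finset.sum_eq_zero
  intro i _
  have : n+1-(n+1) = 0 := by omega
  rw [this]
  simp [Nat.choose_eq_zero_of_lt (by omega : (0:ℕ) < i+1)]

lemma Bfa_rec (n k : ℕ) (hk1 : 1 ≤ k) (hkn : k ≤ n) :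
    Bfa p00 p01 p10 p11 (n+1) k
      = p10 * Atr p00 p01 p10 p11 n k + p00 * Bfa p00 p01 p10 p11 n k := by
  unfold Bfa Atr
  rw [Finset.sum_range_succ]
  have hlast : (Nat.choose (k-1) (n+1) : ℝ) * (Nat.choose (n+1-k) (n+1+1) : ℝ) *
      p11 ^ (k-1-(n+1)) * p10 ^ (n+1+1) * p01 ^ (n+1+1) * p00 ^ (n+1-k-(n+1)-1) = 0 := by
    simp [Nat.choose_eq_zero_of_lt (by omega : k-1 < n+1)]
  rw [hlast, add_zero]
  have hsplit : ∀ i ∈ Finset.range (n+1),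
      (Nat.choose (k-1) i : ℝ) * (Nat.choose (n+1-k) (i+1) : ℝ) *
        p11 ^ (k-1-i) * p10 ^ (i+1) * p01 ^ (i+1) * p00 ^ (n+1-k-i-1)
      = p10 * ((Nat.choose (k-1) i : ℝ) * (Nat.choose (n-k) i : ℝ) *
          p11 ^ (k-1-i) * p10 ^ i * p01 ^ (i+1) * p00 ^ (n-k-i))
        + p00 * ((Nat.choose (k-1) i : ℝ) * (Nat.choose (n-k) (i+1) : ℝ) *
          p11 ^ (k-1-i) * p10 ^ (i+1) * p01 ^ (i+1) * p00 ^ (n-k-i-1)) := by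
    intro i _
    have e1 : n+1-k = (n-k)+1 := by omega
    have e2 : n+1-k-i-1 = n-k-i := by omega
    rw [e2, e1, Nat.choose_succ_succ (n-k) i]
    push_cast
    by_cases hi : i + 1 ≤ n - k
    · obtain ⟨j, hj⟩ : ∃ j, n-k-i = j+1 := ⟨n-k-i-1, by omega⟩
      have hj' : n-k-i-1 = j := by omega
      rw [hj', hj, pow_succ]
      ring
    · have z1 : Nat.choose (n-k) (i+1) = 0 := Nat.choose_eq_zero_of_lt (by omega)
      rw [z1]
      push_cast
      ring
  rw [Finset.sum_congr rfl hsplit, Finset.sum_add_distrib, ← Finset.mul_sum, ← Finset.mul_sum]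

lemma Atr_rec (n k : ℕ) (hk1 : 2 ≤ k) (hkn : k ≤ n+1) :
    Atr p00 p01 p10 p11 (n+1) k
      = p11 * Atr p00 p01 p10 p11 n (k-1) + p01 * Bfa p00 p01 p10 p11 n (k-1) := by
  obtain ⟨m, rfl⟩ : ∃ m, k = m + 1 := ⟨k-1, by omega⟩
  have hm1 : 1 ≤ m := by omega
  have hmn : m ≤ n := by omega
  simp only [Nat.add_sub_cancel]
  unfold Atr Bfa
  rw [Finset.sum_range_succ']
  have e1 : n+1-(m+1) = n-m := by omega
  have e2 : m+1-1 = m := by omega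
  simp only [e1, e2]
  -- goal: ∑ i in range (n+1), t(i+1) + t 0 = p11 * ∑ ... + p01 * ∑ ...
  have hsplit : ∀ i ∈ Finset.range (n+1),
      (Nat.choose m (i+1) : ℝ) * (Nat.choose (n-m) (i+1) : ℝ) *
        p11 ^ (m-(i+1)) * p10 ^ (i+1) * p01 ^ (i+1+1) * p00 ^ (n-m-(i+1))
      = ((Nat.choose (m-1) i : ℝ) * (Nat.choose (n-m) (i+1) : ℝ) *
          p11 ^ (m-1-i) * p10 ^ (i+1) * p01 ^ (i+1) * p00 ^ (n-m-i-1)) * p01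
        + ((Nat.choose (m-1) (i+1) : ℝ) * (Nat.choose (n-m) (i+1) : ℝ) *
          p11 ^ (m-(i+1)) * p10 ^ (i+1) * p01 ^ (i+1+1) * p00 ^ (n-m-(i+1))) := by
    intro i _
    have em : m = (m-1)+1 := by omega
    rw [show Nat.choose m (i+1) = Nat.choose (m-1) i + Nat.choose (m-1) (i+1) by
      rw [em]; exact Nat.choose_succ_succ (m-1) i]
    have e3 : m-(i+1) = m-1-i := by omega
    have e4 : n-m-(i+1) = n-m-i-1 := by omega
    rw [e3, e4]
    push_cast
    ring
  rw [Finset.sum_congr rfl hsplit, Finset.sum_add_distrib]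
  have hB : ∑ i ∈ Finset.range (n+1),
      ((Nat.choose (m-1) i : ℝ) * (Nat.choose (n-m) (i+1) : ℝ) *
        p11 ^ (m-1-i) * p10 ^ (i+1) * p01 ^ (i+1) * p00 ^ (n-m-i-1)) * p01
      = p01 * ∑ i ∈ Finset.range (n+1),
          ((Nat.choose (m-1) i : ℝ) * (Nat.choose (n-m) (i+1) : ℝ) *
            p11 ^ (m-1-i) * p10 ^ (i+1) * p01 ^ (i+1) * p00 ^ (n-m-i-1)) := by
    rw [Finset.mul_sum]
    exact Finset.sum_congr rfl fun i _ => by ring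
  have hA : (∑ i ∈ Finset.range (n+1),
      ((Nat.choose (m-1) (i+1) : ℝ) * (Nat.choose (n-m) (i+1) : ℝ) *
        p11 ^ (m-(i+1)) * p10 ^ (i+1) * p01 ^ (i+1+1) * p00 ^ (n-m-(i+1))))
      + (Nat.choose m 0 : ℝ) * (Nat.choose (n-m) 0 : ℝ) *
          p11 ^ (m-0) * p10 ^ 0 * p01 ^ (0+1) * p00 ^ (n-m-0)
      = p11 * ∑ i ∈ Finset.range (n+1),
          ((Nat.choose (m-1) i : ℝ) * (Nat.choose (n-m) i : ℝ) *
            p11 ^ (m-1-i) * p10 ^ i * p01 ^ (i+1) * p00 ^ (n-m-i)) := by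
    conv_rhs => rw [Finset.mul_sum, Finset.sum_range_succ']
    congr 1
    · rw [Finset.sum_range_succ]
      have hz : (Nat.choose (m-1) (n+1) : ℝ) * (Nat.choose (n-m) (n+1) : ℝ) *
          p11 ^ (m-(n+1)) * p10 ^ (n+1) * p01 ^ (n+1+1) * p00 ^ (n-m-(n+1)) = 0 := by
        simp [Nat.choose_eq_zero_of_lt (by omega : m-1 < n+1)]
      rw [hz, add_zero]
      apply Finset.sum_congr rfl
      intro i _
      by_cases hi : i + 1 ≤ m - 1
      · have e5 : m-(i+1) = (m-1-(i+1))+1 := by omega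
        rw [e5, pow_succ]
        ring
      · have z1 : Nat.choose (m-1) (i+1) = 0 := Nat.choose_eq_zero_of_lt (by omega)
        rw [z1]
        push_cast
        ring
    · have e6 : m - 0 = ((m-1-0)+1) := by omega
      rw [e6, pow_succ]
      simp
      ring
  rw [hB, ← hA]
  ring

lemma mcF_zero_eq (p00 p01 p10 p11 : ℝ) (k : ℕ) (b : Bool) :
    mcF p00 p01 p10 p11 0 k b = if k = 0 ∧ b = false then 1 else 0 := by
  unfold mcF
  rw [Finset.sum_filter, ← Equiv.sum_comp (Equiv.funUnique (Fin 1) Bool).symm]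
  rw [Fintype.sum_bool]
  simp [visitsS1, pathWeight, Equiv.funUnique, Fin.last]
  rcases b with _ | _ <;> rcases k with _ | k <;> simp [Finset.filter_eq_empty_iff]

lemma mcF_closed (p00 p01 p10 p11 : ℝ) (n : ℕ) : ∀ k : ℕ, ∀ b : Bool,
    mcF p00 p01 p10 p11 n k b =
      if b then (if 1 ≤ k ∧ k ≤ n then Atr p00 p01 p10 p11 n k else 0)
      else (if k = 0 then p00 ^ n else if k ≤ n then Bfa p00 p01 p10 p11 n k else 0) := by
  induction n with
  | zero =>
    intro k b
    rw [mcF_zero_eq]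
    rcases b with _ | _ <;> rcases k with _ | k <;> simp
  | succ n ih =>
    intro k b
    rw [mcF_succ]
    cases b
    · simp only [Bool.toNat_false, Nat.zero_le, if_pos, Nat.sub_zero, if_false,
        Bool.false_eq_true]
      rw [ih k true, ih k false]
      by_cases hk0 : k = 0
      · subst hk0
        simp [mcStep, pow_succ]
        ring
      · by_cases hk : k ≤ n
        · rw [if_pos (by omega : 1 ≤ k ∧ k ≤ n), if_neg hk0, if_pos hk,
            if_neg hk0, if_pos (by omega : k ≤ n+1),
            Bfa_rec p00 p01 p10 p11 n k (by omega) hk]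
          simp [mcStep]
        · by_cases hk1 : k = n+1
          · rw [if_neg (by omega : ¬(1 ≤ k ∧ k ≤ n)), if_neg hk0,
              if_neg (by omega : ¬ k ≤ n), if_neg hk0, if_pos (by omega : k ≤ n+1),
              hk1, Bfa_top]
            simp [mcStep]
          · rw [if_neg (by omega : ¬(1 ≤ k ∧ k ≤ n)), if_neg hk0,
              if_neg (by omega : ¬ k ≤ n), if_neg hk0, if_neg (by omega : ¬ k ≤ n+1)]
            simp [mcStep]
    · by_cases hk0 : 1 ≤ k
      · rw [if_pos (by simpa using hk0)]
        simp only [Bool.toNat_true]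
        rw [ih (k-1) true, ih (k-1) false]
        by_cases hk1 : k = 1
        · subst hk1
          simp only [Nat.sub_self]
          simp [mcStep, Atr_one p00 p01 p10 p11 n]
        · by_cases hk2 : k ≤ n+1
          · rw [if_pos (by omega : 1 ≤ k-1 ∧ k-1 ≤ n), if_neg (by omega : ¬ k-1 = 0),
              if_pos (by omega : k-1 ≤ n), if_pos (by omega : 1 ≤ k ∧ k ≤ n+1),
              Atr_rec p00 p01 p10 p11 n k (by omega) hk2]
            simp [mcStep]
          · rw [if_neg (by omega : ¬(1 ≤ k-1 ∧ k-1 ≤ n)), if_neg (by omega : ¬ k-1 = 0),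
              if_neg (by omega : ¬ k-1 ≤ n), if_neg (by omega : ¬(1 ≤ k ∧ k ≤ n+1))]
            simp [mcStep]
      · rw [if_neg (by simpa using hk0)]
        have h : ¬(1 ≤ k ∧ k ≤ n+1) := by omega
        simp [h]

lemma Atr_to_Icc (p00 p01 p10 p11 : ℝ) (n k : ℕ) (hk1 : 1 ≤ k) (hkn : k ≤ n) :
    Atr p00 p01 p10 p11 n k
      = ∑ j ∈ Finset.Icc 1 (min k (n+1-k)),
          (Nat.choose (k-1) (j-1) : ℝ) * p11 ^ (k-j) * p10 ^ (j-1) *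
            (Nat.choose (n-k) (j-1) : ℝ) * p01 ^ j * p00 ^ (n+1-k-j) := by
  unfold Atr
  rw [← Finset.Ico_add_one_right_eq_Icc, Finset.sum_Ico_eq_sum_range]
  have hMle : min k (n+1-k) + 1 - 1 ≤ n+1 := by omega
  rw [← Finset.sum_subset (Finset.range_subset_range.mpr hMle)]
  apply Finset.sum_congr rfl
  · intro i hi
    simp only [Finset.mem_range] at hi
    have e1 : k - (1+i) = k-1-i := by omega
    have e2 : 1+i-1 = i := by omega
    have e3 : n+1-k-(1+i) = n-k-i := by omega
    rw [e1, e2, e3]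
    ring
  · intro i _ hi
    simp only [Finset.mem_range, not_lt] at hi
    rcases (by omega : k - 1 < i ∨ n - k < i) with h | h
    · rw [Nat.choose_eq_zero_of_lt h]
      push_cast
      ring
    · rw [Nat.choose_eq_zero_of_lt h]
      push_cast
      ring

lemma Bfa_to_Icc (p00 p01 p10 p11 : ℝ) (n k : ℕ) (hk1 : 1 ≤ k) (hkn : k ≤ n) :
    Bfa p00 p01 p10 p11 n k
      = ∑ j ∈ Finset.Icc 1 (min k (n-k)),
          (Nat.choose (k-1) (j-1) : ℝ) * p11 ^ (k-j) * p10 ^ j *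
            (Nat.choose (n-k) j : ℝ) * p01 ^ j * p00 ^ (n-k-j) := by
  unfold Bfa
  rw [← Finset.Ico_add_one_right_eq_Icc, Finset.sum_Ico_eq_sum_range]
  have hMle : min k (n-k) + 1 - 1 ≤ n+1 := by omega
  rw [← Finset.sum_subset (Finset.range_subset_range.mpr hMle)]
  apply Finset.sum_congr rfl
  · intro i hi
    simp only [Finset.mem_range] at hi
    have e1 : k - (1+i) = k-1-i := by omega
    have e2 : 1+i-1 = i := by omega
    have e3 : n-k-(1+i) = n-k-i-1 := by omega
    have e4 : 1+i = i+1 := by omega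
    rw [e1, e2, e3, e4]
    ring
  · intro i _ hi
    simp only [Finset.mem_range, not_lt] at hi
    rcases (by omega : k - 1 < i ∨ n - k < i + 1) with h | h
    · rw [Nat.choose_eq_zero_of_lt h]
      push_cast
      ring
    · rw [Nat.choose_eq_zero_of_lt h]
      push_cast
      ring

theorem stmt1 (p00 p01 p10 p11 : ℝ) (N k : ℕ) (hN : 1 ≤ N) (hk0 : 0 < k) (hkN : k < N) :
    ∑ w ∈ Finset.univ.filter (fun w : Fin N → Bool =>
        w ⟨0, by omega⟩ = false ∧ visitsS1 w = k),
      pathWeight p00 p01 p10 p11 w =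
    (∑ j ∈ Finset.Icc 1 (min k (N - k)),
        (Nat.choose (k - 1) (j - 1) : ℝ) * p11 ^ (k - j) * p10 ^ (j - 1) *
          (Nat.choose (N - k - 1) (j - 1) : ℝ) * p01 ^ j * p00 ^ (N - k - j)) +
    (∑ j ∈ Finset.Icc 1 (min k (N - k - 1)),
        (Nat.choose (k - 1) (j - 1) : ℝ) * p11 ^ (k - j) * p10 ^ j *
          (Nat.choose (N - k - 1) j : ℝ) * p01 ^ j * p00 ^ (N - k - j - 1)) := by
  obtain ⟨n, rfl⟩ : ∃ n, N = n + 1 := ⟨N - 1, by omega⟩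
  have hsplit :
      (∑ w ∈ Finset.univ.filter (fun w : Fin (n+1) → Bool =>
          w ⟨0, by omega⟩ = false ∧ visitsS1 w = k), pathWeight p00 p01 p10 p11 w)
      = mcF p00 p01 p10 p11 n k true + mcF p00 p01 p10 p11 n k false := by
    unfold mcF
    rw [← Finset.sum_filter_add_sum_filter_not
      (Finset.univ.filter (fun w : Fin (n+1) → Bool =>
        w ⟨0, by omega⟩ = false ∧ visitsS1 w = k))
      (fun w => w (Fin.last n) = true)]
    congr 1
    · congr 1
      rw [Finset.filter_filter]
      apply Finset.filter_congr
      intro w _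
      constructor
      · rintro ⟨⟨h1, h2⟩, h3⟩
        exact ⟨h1, h2, h3⟩
      · rintro ⟨h1, h2, h3⟩
        exact ⟨⟨h1, h2⟩, h3⟩
    · congr 1
      rw [Finset.filter_filter]
      apply Finset.filter_congr
      intro w _
      simp only [Bool.not_eq_true]
      constructor
      · rintro ⟨⟨h1, h2⟩, h3⟩
        exact ⟨h1, h2, h3⟩
      · rintro ⟨h1, h2, h3⟩
        exact ⟨⟨h1, h2⟩, h3⟩
  rw [hsplit, mcF_closed, mcF_closed,
    if_pos (by omega : 1 ≤ k ∧ k ≤ n), if_neg (by omega : ¬ k = 0),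
    if_pos (by omega : k ≤ n),
    Atr_to_Icc p00 p01 p10 p11 n k (by omega) (by omega),
    Bfa_to_Icc p00 p01 p10 p11 n k (by omega) (by omega)]
  have e1 : n + 1 - k - 1 = n - k := by omega
  simp only [e1, Nat.add_sub_cancel]
  congr 1
  apply Finset.sum_congr rfl
  intro j hj
  simp only [Finset.mem_Icc] at hj
  have e2 : n + 1 - k - j - 1 = n - k - j := by omega
  rw [e2]
end

section
/- (Part M of the proof of Theorem 1.) Let N ≥ 2 and 0 < k < N. Then the sum, over all paths w : Fin N → Bool with w(0) = false, w(N−1) = false, and exactly k visits to S1, of the weight of w equals ∑_{j=1}^{min(k, N−k−1)} C(k−1, j−1)·p11^{k−j}·p10^{j}·C(N−k−1, j)·p01^{j}·p00^{N−k−j−1}. -/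
open Finset

def fwt (p00 p01 p10 p11 : ℝ) : (N : ℕ) → Bool → (Fin N → Bool) → ℝ
  | 0, _, _ => 1
  | N+1, s, w => mcStep p00 p01 p10 p11 s (w 0) * fwt p00 p01 p10 p11 N (w 0) (Fin.tail w)

lemma fwt_eq_prod (p00 p01 p10 p11 : ℝ) : ∀ (N : ℕ) (s : Bool) (w : Fin N → Bool),
    fwt p00 p01 p10 p11 N s w =
      ∏ i : Fin N, mcStep p00 p01 p10 p11 ((Fin.cons s w : Fin (N+1) → Bool) i.castSucc) ((Fin.cons s w : Fin (N+1) → Bool) i.succ)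
  | 0, s, w => by simp [fwt]
  | N+1, s, w => by
    rw [fwt, fwt_eq_prod p00 p01 p10 p11 N (w 0) (Fin.tail w), Fin.prod_univ_succ]
    congr 1
    apply Finset.prod_congr rfl
    intro i _
    rw [Fin.cons_succ, Fin.cons_succ, Fin.cons_self_tail]
    rfl

lemma pathWeight_cons (p00 p01 p10 p11 : ℝ) (N : ℕ) (s : Bool) (w : Fin N → Bool) :
    pathWeight p00 p01 p10 p11 (Fin.cons s w : Fin (N+1) → Bool) = fwt p00 p01 p10 p11 N s w := by
  rw [fwt_eq_prod]
  apply Finset.prod_congr rfl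
  intro i _
  congr 1

lemma visits_cons {N : ℕ} (b : Bool) (w : Fin N → Bool) :
    visitsS1 (Fin.cons b w : Fin (N+1) → Bool) = (if b then 1 else 0) + visitsS1 w := by
  unfold visitsS1
  rw [Finset.card_filter, Finset.card_filter, Fin.sum_univ_succ]
  simp [Fin.cons_succ]

def Spath (p00 p01 p10 p11 : ℝ) (M : ℕ) (s : Bool) (k : ℕ) : ℝ :=
  ∑ w ∈ Finset.univ.filter
      (fun w : Fin (M+1) → Bool => w (Fin.last M) = false ∧ visitsS1 w = k),
    fwt p00 p01 p10 p11 (M+1) s w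

lemma Spath_zero (p00 p01 p10 p11 : ℝ) (s : Bool) (k : ℕ) :
    Spath p00 p01 p10 p11 0 s k = if k = 0 then mcStep p00 p01 p10 p11 s false else 0 := by
  rw [Spath, Finset.sum_filter, Fintype.sum_equiv (Equiv.funUnique (Fin 1) Bool) _
    (fun b : Bool => if (b = false ∧ (if b = true then 1 else 0) = k) then
      mcStep p00 p01 p10 p11 s b else 0)]
  · rw [Fintype.sum_bool]
    by_cases hk : k = 0 <;> simp [hk, eq_comm]
  · intro w
    have hv : visitsS1 w = if w 0 = true then 1 else 0 := by
      rw [visitsS1, show (Finset.univ : Finset (Fin 1)) = {0} from rfl,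
        Finset.filter_singleton]
      by_cases hb : w 0 = true <;> simp [hb]
    have hl : w (Fin.last 0) = w 0 := rfl
    simp only [hl, hv, fwt, Equiv.funUnique, Equiv.piUnique, Equiv.coe_fn_mk]
    have : w default = w 0 := rfl
    simp only [this, mul_one]

lemma Spath_succ (p00 p01 p10 p11 : ℝ) (M : ℕ) (s : Bool) (k : ℕ) :
    Spath p00 p01 p10 p11 (M+1) s k =
      mcStep p00 p01 p10 p11 s false * Spath p00 p01 p10 p11 M false k +
      mcStep p00 p01 p10 p11 s true *
        (if k = 0 then 0 else Spath p00 p01 p10 p11 M true (k-1)) := by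
  rw [Spath, Finset.sum_filter]
  rw [← Equiv.sum_comp (Fin.consEquiv (fun _ : Fin (M+1+1) => Bool))
    (fun w : Fin (M+1+1) → Bool =>
      if (w (Fin.last (M+1)) = false ∧ visitsS1 w = k) then
        fwt p00 p01 p10 p11 (M+1+1) s w else 0)]
  rw [Fintype.sum_prod_type, Fintype.sum_bool]
  have key : ∀ (b : Bool) (w : Fin (M+1) → Bool),
      (Fin.consEquiv (fun _ : Fin (M+1+1) => Bool)) (b, w) = Fin.cons b w := fun _ _ => rfl
  have hlast : ∀ (b : Bool) (w : Fin (M+1) → Bool),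
      (Fin.cons b w : Fin (M+1+1) → Bool) (Fin.last (M+1)) = w (Fin.last M) := by
    intro b w
    rw [← Fin.succ_last, Fin.cons_succ]
  have hfwt : ∀ (b : Bool) (w : Fin (M+1) → Bool),
      fwt p00 p01 p10 p11 (M+1+1) s (Fin.cons b w) =
        mcStep p00 p01 p10 p11 s b * fwt p00 p01 p10 p11 (M+1) b w := by
    intro b w
    rw [fwt]
    simp [Fin.cons_zero, Fin.tail_cons]
  simp only [key, hlast, hfwt, visits_cons]
  norm_num
  rw [add_comm]
  congr 1
  · rw [Spath, Finset.sum_filter, Finset.mul_sum]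
    apply Finset.sum_congr rfl
    intro w _
    split <;> simp
  · by_cases hk : k = 0
    · simp only [hk, mul_zero]
      apply Finset.sum_eq_zero
      intro w _
      rw [if_neg]
      rintro ⟨-, h⟩
      omega
    · simp only [hk, if_false]
      rw [Spath, Finset.sum_filter, Finset.mul_sum]
      apply Finset.sum_congr rfl
      intro w _
      have h : (1 + visitsS1 w = k) ↔ (visitsS1 w = k - 1) := by omega
      simp only [h]
      split <;> simp

noncomputable def Af (p00 p01 p10 p11 : ℝ) (n k : ℕ) : ℝ :=
  if k = 0 then p00^(n-1) else
  ∑ j ∈ Finset.range n, (Nat.choose (k-1) j : ℝ) * (Nat.choose (n-k-1) (j+1) : ℝ) *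
    p11^(k-1-j) * p10^(j+1) * p01^(j+1) * p00^(n-k-2-j)

noncomputable def Bf (p00 p01 p10 p11 : ℝ) (n k : ℕ) : ℝ :=
  if n ≤ k+1 then 0 else
  ∑ j ∈ Finset.range n, (Nat.choose k j : ℝ) * (Nat.choose (n-k-2) j : ℝ) *
    p11^(k-j) * p10^(j+1) * p01^j * p00^(n-k-2-j)

lemma Af_base (p00 p01 p10 p11 : ℝ) (k : ℕ) :
    Af p00 p01 p10 p11 2 k = if k = 0 then p00 else 0 := by
  by_cases hk : k = 0
  · simp [Af, hk]
  · rw [Af, if_neg hk, if_neg hk]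
    apply Finset.sum_eq_zero
    intro j _
    have : (2 - k - 1).choose (j+1) = 0 := by
      apply Nat.choose_eq_zero_of_lt; omega
    simp [this]

lemma Bf_base (p00 p01 p10 p11 : ℝ) (k : ℕ) :
    Bf p00 p01 p10 p11 2 k = if k = 0 then p10 else 0 := by
  by_cases hk : k = 0
  · subst hk
    rw [Bf, if_neg (by omega)]
    rw [show (2:ℕ) = 1 + 1 from rfl, Finset.sum_range_succ, Finset.sum_range_one]
    norm_num
  · rw [Bf, if_pos (by omega), if_neg hk]

lemma Af_succ_zero (p00 p01 p10 p11 : ℝ) (n : ℕ) (hn : 1 ≤ n) :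
    Af p00 p01 p10 p11 (n+1) 0 = p00 * Af p00 p01 p10 p11 n 0 := by
  rw [Af, Af, if_pos rfl, if_pos rfl]
  have : n + 1 - 1 = (n - 1) + 1 := by omega
  rw [this, pow_succ]
  ring

lemma Af_eq_zero_of_ge (p00 p01 p10 p11 : ℝ) (n k : ℕ) (hk : 1 ≤ k) (h : n ≤ k) :
    Af p00 p01 p10 p11 n k = 0 := by
  rw [Af, if_neg (by omega)]
  apply Finset.sum_eq_zero
  intro j _
  have : (n - k - 1).choose (j+1) = 0 := by
    apply Nat.choose_eq_zero_of_lt; omega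
  simp [this]

lemma Af_succ (p00 p01 p10 p11 : ℝ) (n k : ℕ) (hn : 2 ≤ n) (hk : 1 ≤ k) :
    Af p00 p01 p10 p11 (n+1) k =
      p00 * Af p00 p01 p10 p11 n k + p01 * Bf p00 p01 p10 p11 n (k-1) := by
  rw [Af, if_neg (by omega)]
  by_cases hkn : n ≤ k
  · rw [Af_eq_zero_of_ge p00 p01 p10 p11 n k hk hkn, mul_zero, zero_add,
      Bf, if_pos (by omega), mul_zero]
    apply Finset.sum_eq_zero
    intro j _
    have h0 : (n+1-k-1).choose (j+1) = 0 := Nat.choose_eq_zero_of_lt (by omega)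
    simp [h0]
  · rw [Af, if_neg (by omega), Bf, if_neg (by omega)]
    rw [Finset.sum_range_succ,
      show (n+1-k-1).choose (n+1) = 0 from Nat.choose_eq_zero_of_lt (by omega)]
    simp only [Nat.cast_zero, mul_zero, zero_mul, add_zero]
    rw [Finset.mul_sum, Finset.mul_sum, ← Finset.sum_add_distrib]
    apply Finset.sum_congr rfl
    intro j hj
    rw [Finset.mem_range] at hj
    have he2 : n + 1 - k - 1 = n - k := by omega
    have he3 : n - (k-1) - 2 = n - k - 1 := by omega
    have he4 : n - (k-1) - 2 - j = n - k - 1 - j := by omega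
    have he5 : n + 1 - k - 2 - j = n - k - 1 - j := by omega
    rw [he2, he3, he5]
    rcases lt_or_ge j k with h1 | h1
    · rcases lt_or_ge j (n-k-1) with h2 | h2
      · -- main case
        have hp : (n-k).choose (j+1) = (n-k-1).choose j + (n-k-1).choose (j+1) := by
          rw [show n - k = (n-k-1)+1 by omega, Nat.choose_succ_succ]
          simp
        have he1 : n - k - 1 - j = (n - k - 2 - j) + 1 := by omega
        rw [hp, he1, pow_succ]
        push_cast
        ring
      · rcases eq_or_lt_of_le h2 with h3 | h3
        · -- j = n-k-1
          have hp : (n-k).choose (j+1) = 1 := by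
            rw [show j+1 = n-k by omega]; exact Nat.choose_self _
          have hz : (n-k-1).choose (j+1) = 0 := Nat.choose_eq_zero_of_lt (by omega)
          have ho : (n-k-1).choose j = 1 := by
            rw [← h3]; exact Nat.choose_self _
          rw [hp, hz, ho, show n - k - 1 - j = 0 by omega,
            show n - k - 2 - j = 0 by omega]
          push_cast
          ring
        · -- j > n-k-1
          have hz1 : (n-k).choose (j+1) = 0 := Nat.choose_eq_zero_of_lt (by omega)
          have hz2 : (n-k-1).choose (j+1) = 0 := Nat.choose_eq_zero_of_lt (by omega)
          have hz3 : (n-k-1).choose j = 0 := Nat.choose_eq_zero_of_lt (by omega)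
          rw [hz1, hz2, hz3]
          push_cast
          ring
    · have hz : (k-1).choose j = 0 := Nat.choose_eq_zero_of_lt (by omega)
      rw [hz]
      push_cast
      ring

lemma sum_shift_aux (f g h : ℕ → ℝ) (d e : ℝ) (n : ℕ)
    (hterm : ∀ j, j < n → f (j+1) = d * g j + e * h (j+1))
    (hf0 : f 0 = e * h 0) (hhn : h n = 0) :
    ∑ i ∈ Finset.range (n+1), f i =
      d * ∑ j ∈ Finset.range n, g j + e * ∑ j ∈ Finset.range n, h j := by
  rw [Finset.sum_range_succ']
  rw [Finset.sum_congr rfl (fun j hj => hterm j (Finset.mem_range.1 hj)),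
    Finset.sum_add_distrib, ← Finset.mul_sum, ← Finset.mul_sum, hf0]
  have h1 := Finset.sum_range_succ h n
  have h2 := Finset.sum_range_succ' h n
  have key : ∑ j ∈ Finset.range n, h (j+1) = ∑ j ∈ Finset.range n, h j - h 0 := by
    rw [hhn] at h1
    rw [h1] at h2
    linarith
  rw [key]
  ring

lemma Bf_succ (p00 p01 p10 p11 : ℝ) (n k : ℕ) (hn : 2 ≤ n) (hk : 1 ≤ k) :
    Bf p00 p01 p10 p11 (n+1) k =
      p10 * Af p00 p01 p10 p11 n k + p11 * Bf p00 p01 p10 p11 n (k-1) := by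
  by_cases hkn : n ≤ k
  · rw [Bf, if_pos (by omega), Af_eq_zero_of_ge p00 p01 p10 p11 n k hk hkn,
      Bf, if_pos (by omega), mul_zero, mul_zero, add_zero]
  · rw [Bf, if_neg (by omega), Af, if_neg (by omega), Bf, if_neg (by omega)]
    apply sum_shift_aux
    · intro j hj
      have he1 : n + 1 - k - 2 = n - k - 1 := by omega
      have he2 : n - (k-1) - 2 = n - k - 1 := by omega
      rw [he1, he2, show n - k - 1 - (j+1) = n - k - 2 - j by omega,
        show k - 1 - (j+1) = k - 2 - j by omega]
      rcases lt_or_ge (j+1) k with h1 | h1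
      · -- j+1 < k : Pascal
        have hp : k.choose (j+1) = (k-1).choose j + (k-1).choose (j+1) := by
          rw [show k = (k-1)+1 by omega, Nat.choose_succ_succ]
          simp
        have hel : k - (j+1) = (k - 2 - j) + 1 := by omega
        have hem : k - 1 - j = (k - 2 - j) + 1 := by omega
        rw [hp, hel, hem, pow_succ]
        push_cast
        ring
      · rcases eq_or_lt_of_le h1 with h2 | h2
        · -- j+1 = k
          have hc1 : k.choose (j+1) = 1 := by rw [h2]; exact Nat.choose_self _
          have hc2 : (k-1).choose (j+1) = 0 := Nat.choose_eq_zero_of_lt (by omega)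
          have hc3 : (k-1).choose j = 1 := by
            rw [show j = k - 1 by omega]; exact Nat.choose_self _
          rw [hc1, hc2, hc3, show k - (j+1) = 0 by omega, show k - 1 - j = 0 by omega]
          push_cast
          ring
        · -- j + 1 > k
          have hc1 : k.choose (j+1) = 0 := Nat.choose_eq_zero_of_lt (by omega)
          have hc2 : (k-1).choose (j+1) = 0 := Nat.choose_eq_zero_of_lt (by omega)
          have hc3 : (k-1).choose j = 0 := Nat.choose_eq_zero_of_lt (by omega)
          rw [hc1, hc2, hc3]
          push_cast
          ring
    · -- f 0 = p11 * h 0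
      have he1 : n + 1 - k - 2 - 0 = n - k - 1 := by omega
      have he2 : n - (k-1) - 2 - 0 = n - k - 1 := by omega
      have he3 : n + 1 - k - 2 = n - k - 1 := by omega
      have he4 : n - (k-1) - 2 = n - k - 1 := by omega
      have he5 : k - 0 = (k - 1 - 0) + 1 := by omega
      rw [he1, he2, he3, he4, he5, pow_succ]
      push_cast
      simp [Nat.choose_zero_right]
      ring
    · -- h n = 0
      have : (k-1).choose n = 0 := Nat.choose_eq_zero_of_lt (by omega)
      simp [this]

lemma Bf_succ_zero (p00 p01 p10 p11 : ℝ) (n : ℕ) (hn : 2 ≤ n) :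
    Bf p00 p01 p10 p11 (n+1) 0 = p10 * Af p00 p01 p10 p11 n 0 := by
  rw [Bf, if_neg (by omega), Af, if_pos rfl]
  rw [Finset.sum_eq_single_of_mem 0 (Finset.mem_range.2 (by omega))]
  · rw [show n + 1 - 0 - 2 - 0 = n - 1 by omega]
    norm_num
  · intro j _ hj
    have : Nat.choose 0 j = 0 := Nat.choose_eq_zero_of_lt (by omega)
    simp [this]

lemma Spath_closed (p00 p01 p10 p11 : ℝ) : ∀ (M k : ℕ),
    Spath p00 p01 p10 p11 M false k = Af p00 p01 p10 p11 (M+2) k ∧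
    Spath p00 p01 p10 p11 M true k = Bf p00 p01 p10 p11 (M+2) k := by
  intro M
  induction M with
  | zero =>
    intro k
    rw [Spath_zero, Spath_zero, Af_base, Bf_base]
    constructor <;> by_cases hk : k = 0 <;> simp [hk, mcStep]
  | succ M ih =>
    intro k
    have hM : 2 ≤ M + 2 := by omega
    constructor
    · rw [Spath_succ]
      by_cases hk : k = 0
      · subst hk
        rw [if_pos rfl, mul_zero, add_zero, (ih 0).1,
          show M + 1 + 2 = (M + 2) + 1 from rfl, Af_succ_zero p00 p01 p10 p11 (M+2) (by omega)]
        rfl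
      · rw [if_neg hk, (ih k).1, (ih (k-1)).2,
          show M + 1 + 2 = (M + 2) + 1 from rfl, Af_succ p00 p01 p10 p11 (M+2) k hM (by omega)]
        rfl
    · rw [Spath_succ]
      by_cases hk : k = 0
      · subst hk
        rw [if_pos rfl, mul_zero, add_zero, (ih 0).1,
          show M + 1 + 2 = (M + 2) + 1 from rfl, Bf_succ_zero p00 p01 p10 p11 (M+2) hM]
        rfl
      · rw [if_neg hk, (ih k).1, (ih (k-1)).2,
          show M + 1 + 2 = (M + 2) + 1 from rfl, Bf_succ p00 p01 p10 p11 (M+2) k hM (by omega)]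
        rfl

lemma Af_eq_final (p00 p01 p10 p11 : ℝ) (N k : ℕ) (hN : 2 ≤ N) (hk0 : 0 < k) (hkN : k < N) :
    Af p00 p01 p10 p11 N k =
      ∑ j ∈ Finset.Icc 1 (min k (N - k - 1)),
        (Nat.choose (k - 1) (j - 1) : ℝ) * p11 ^ (k - j) * p10 ^ j *
          (Nat.choose (N - k - 1) j : ℝ) * p01 ^ j * p00 ^ (N - k - j - 1) := by
  rw [Af, if_neg (by omega)]
  have hsub : Finset.Icc 1 (min k (N-k-1)) ⊆ Finset.Icc 1 N :=
    Finset.Icc_subset_Icc_right (le_trans (min_le_left k (N-k-1)) hkN.le)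
  have hzero : ∀ j ∈ Finset.Icc 1 N, j ∉ Finset.Icc 1 (min k (N-k-1)) →
      (Nat.choose (k - 1) (j - 1) : ℝ) * p11 ^ (k - j) * p10 ^ j *
        (Nat.choose (N - k - 1) j : ℝ) * p01 ^ j * p00 ^ (N - k - j - 1) = 0 := by
    intro j hj hj2
    rw [Finset.mem_Icc] at hj
    rw [Finset.mem_Icc, not_and, not_le] at hj2
    have hmin : min k (N-k-1) < j := hj2 hj.1
    rcases min_lt_iff.1 hmin with h | h
    · have : (k-1).choose (j-1) = 0 := Nat.choose_eq_zero_of_lt (by omega)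
      simp [this]
    · have : (N-k-1).choose j = 0 := Nat.choose_eq_zero_of_lt (by omega)
      simp [this]
  rw [Finset.sum_subset hsub hzero]
  rw [← Finset.Ico_add_one_right_eq_Icc, Finset.sum_Ico_eq_sum_range,
    show N + 1 - 1 = N by omega]
  apply Finset.sum_congr rfl
  intro i hi
  rw [show 1 + i - 1 = i by omega, show k - (1+i) = k - 1 - i by omega,
    show N - k - (1+i) - 1 = N - k - 2 - i by omega, show 1 + i = i + 1 by omega]
  ring

theorem stmt15 (p00 p01 p10 p11 : ℝ) (N k : ℕ) (hN : 2 ≤ N) (hk0 : 0 < k) (hkN : k < N) :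
    ∑ w ∈ Finset.univ.filter (fun w : Fin N → Bool =>
        w ⟨0, by omega⟩ = false ∧ w ⟨N - 1, by omega⟩ = false ∧ visitsS1 w = k),
      pathWeight p00 p01 p10 p11 w =
    ∑ j ∈ Finset.Icc 1 (min k (N - k - 1)),
        (Nat.choose (k - 1) (j - 1) : ℝ) * p11 ^ (k - j) * p10 ^ j *
          (Nat.choose (N - k - 1) j : ℝ) * p01 ^ j * p00 ^ (N - k - j - 1) := by
  rw [← Af_eq_final p00 p01 p10 p11 N k hN hk0 hkN]
  obtain ⟨M, rfl⟩ : ∃ M, N = M + 2 := ⟨N - 2, by omega⟩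
  rw [show M + 2 = (M + 1) + 1 from rfl] at *
  rw [← (Spath_closed p00 p01 p10 p11 M k).1, Spath, Finset.sum_filter, Finset.sum_filter]
  rw [← Equiv.sum_comp (Fin.consEquiv (fun _ : Fin (M+1+1) => Bool))
    (fun w : Fin (M+1+1) → Bool =>
      if (w ⟨0, by omega⟩ = false ∧ w ⟨M+1+1-1, by omega⟩ = false ∧ visitsS1 w = k) then
        pathWeight p00 p01 p10 p11 w else 0)]
  rw [Fintype.sum_prod_type, Fintype.sum_bool]
  have key : ∀ (b : Bool) (w : Fin (M+1) → Bool),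
      (Fin.consEquiv (fun _ : Fin (M+1+1) => Bool)) (b, w) = Fin.cons b w := fun _ _ => rfl
  have h0 : ∀ (b : Bool) (w : Fin (M+1) → Bool),
      (Fin.cons b w : Fin (M+1+1) → Bool) ⟨0, by omega⟩ = b := fun _ _ => rfl
  have hlast : ∀ (b : Bool) (w : Fin (M+1) → Bool),
      (Fin.cons b w : Fin (M+1+1) → Bool) ⟨M+1+1-1, by omega⟩ = w (Fin.last M) := by
    intro b w
    have : (⟨M+1+1-1, by omega⟩ : Fin (M+1+1)) = (Fin.last M).succ := rfl
    rw [this, Fin.cons_succ]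
  have hpw : ∀ (b : Bool) (w : Fin (M+1) → Bool),
      pathWeight p00 p01 p10 p11 (Fin.cons b w : Fin (M+1+1) → Bool) =
        fwt p00 p01 p10 p11 (M+1) b w := fun b w => pathWeight_cons p00 p01 p10 p11 (M+1) b w
  simp only [key, h0, hlast, hpw, visits_cons]
  norm_num
end
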